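/- arXiv:1509.08299 — 2 statements merged into one kernel-verified Lean document; each statement's English description precedes it below -/
import Mathlib

section
/- Let P', Λ, σ², σ_S² > 0, α = P'/(P'+Λ+σ²), and P_U = P' + α²σ_S². Define f(v,w) = sqrt(α)·(P' + ασ_S² + vα·sqrt(wσ_S²)) / sqrt(P_U·(P' + ασ_S² + α(w−Λ) + 2vα·sqrt(wσ_S²))). Then for all v with −1 ≤ v ≤ 1 and all w with 0 ≤ w ≤ Λ (such that the denominator is positive), f(v,w) ≥ f(0,Λ) = sqrt(α(P'+ασ_S²)/P_U). -/
theorem stmt1 (P' Λ σ2 σS2 α PU : ℝ) (f : ℝ → ℝ → ℝ)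
    (hP' : 0 < P') (hΛ : 0 < Λ) (hσ2 : 0 < σ2) (hσS2 : 0 < σS2)
    (hα : α = P' / (P' + Λ + σ2)) (hPU : PU = P' + α ^ 2 * σS2)
    (hf : ∀ v w, f v w =
      Real.sqrt α * (P' + α * σS2 + v * α * Real.sqrt (w * σS2)) /
        Real.sqrt (PU * (P' + α * σS2 + α * (w - Λ) + 2 * v * α * Real.sqrt (w * σS2)))) :
    (∀ v w : ℝ, -1 ≤ v → v ≤ 1 → 0 ≤ w → w ≤ Λ →
      0 < P' + α * σS2 + α * (w - Λ) + 2 * v * α * Real.sqrt (w * σS2) →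
      f 0 Λ ≤ f v w) ∧
    f 0 Λ = Real.sqrt (α * (P' + α * σS2) / PU) := by
  have hα0 : 0 < α := by rw [hα]; positivity
  have hA : 0 < P' + α * σS2 := by positivity
  have hPU0 : 0 < PU := by rw [hPU]; positivity
  set A : ℝ := P' + α * σS2 with hAdef
  have hf0 : f 0 Λ = Real.sqrt α * A / Real.sqrt (PU * A) := by
    rw [hf]
    norm_num
  constructor
  · intro v w hv1 hv2 hw hwΛ hpos
    rw [hf v w, hf0]
    set r : ℝ := Real.sqrt (w * σS2) with hr
    have hr0 : 0 ≤ r := Real.sqrt_nonneg _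
    set D : ℝ := A + α * (w - Λ) + 2 * v * α * r with hD
    have hD0 : 0 < D := hpos
    have hsle : α * (w - Λ) ≤ 0 := by nlinarith
    have hAs : 0 < A + v * α * r := by nlinarith
    rw [div_le_div_iff₀ (by positivity) (by positivity)]
    have hkey : Real.sqrt (A * D) ≤ A + v * α * r := by
      rw [show A + v * α * r = Real.sqrt ((A + v * α * r) ^ 2) from
        (Real.sqrt_sq hAs.le).symm]
      apply Real.sqrt_le_sqrt
      nlinarith [sq_nonneg (v * α * r)]
    have hc : (0:ℝ) ≤ Real.sqrt α * Real.sqrt PU * Real.sqrt A := by positivity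
    have hmul := mul_le_mul_of_nonneg_left hkey hc
    rw [Real.sqrt_mul hPU0.le, Real.sqrt_mul hPU0.le]
    have hAD : Real.sqrt A * Real.sqrt D = Real.sqrt (A * D) :=
      (Real.sqrt_mul hA.le _).symm
    have hAA : Real.sqrt A * Real.sqrt A = A := Real.mul_self_sqrt hA.le
    calc Real.sqrt α * A * (Real.sqrt PU * Real.sqrt D)
        = Real.sqrt α * Real.sqrt PU * Real.sqrt A *
            (Real.sqrt A * Real.sqrt D) := by
          linear_combination Real.sqrt α * Real.sqrt PU * Real.sqrt D * hAA.symm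
      _ = Real.sqrt α * Real.sqrt PU * Real.sqrt A * Real.sqrt (A * D) := by
          rw [hAD]
      _ ≤ Real.sqrt α * Real.sqrt PU * Real.sqrt A * (A + v * α * r) := hmul
      _ = Real.sqrt α * (A + v * α * r) * (Real.sqrt PU * Real.sqrt A) := by
          ring
  · rw [hf0]
    have h1 : Real.sqrt α ^ 2 = α := Real.sq_sqrt hα0.le
    have h2 : Real.sqrt (PU * A) ^ 2 = PU * A := Real.sq_sqrt (by positivity)
    rw [show α * A / PU = (Real.sqrt α * A / Real.sqrt (PU * A)) ^ 2 by
      rw [div_pow, mul_pow, h1, h2]; field_simp]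
    rw [Real.sqrt_sq (by positivity)]
end

section
/- Let n ≥ 1 and let Ẑ be uniformly distributed on the unit sphere S^{n−1} ⊂ ℝⁿ. For any fixed unit vector r̂ and any γ with 1/sqrt(2πn) < γ < 1, the probability that ⟨r̂, Ẑ⟩ ≥ γ is at most (1 − γ²)^{(n−1)/2}. -/
open MeasureTheory
open scoped RealInnerProductSpace

open Metric Set Real Module
open scoped ENNReal

/-!
`Measure.toSphere` turns the normalized measure of the cap into `vol C / vol B`, where `B` is the
unit ball and `C = {x | 0 < ‖x‖ < 1, γ ‖x‖ ≤ ⟪r, x⟫}` is the cone over the cap. Write `n = d + 1`,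
`s = √(1 - γ²)` and `ω_d` for the volume of the unit `d`-ball, and slice perpendicular to `r`
(`t = ⟪r, x⟫`). Where `t ≤ γ`, `C` lies in the cone of height `γ` over a `d`-ball of radius `s`, of
volume `ω_d s^d γ / n`; where `t ≥ γ`, it lies in the cap of the ball, whose volume
`∫_γ^1 ω_d (1 - t²)^{d/2} dt` is at most `∫_γ^1 (t / γ) ω_d (1 - t²)^{d/2} dt
= ω_d s^{d+2} / (γ (n + 1))`. So `vol C ≤ ω_d s^d (γ / n + (1 - γ²) / (γ (n + 1)))`.
For `γ > 1 / √(2πn)` the bracket is at most `√(2π / (n + 1))`, and log-convexity of `Γ` gives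
`√(2π / (n + 1)) ω_d ≤ ω_n = vol B`.
-/

theorem Real.Gamma_add_half_le_sqrt_mul_Gamma {s : ℝ} (hs : 0 < s) :
    Gamma (s + 1 / 2) ≤ √s * Gamma s := by
  have hconv := Gamma_mul_add_mul_le_rpow_Gamma_mul_rpow_Gamma hs (by linarith : 0 < s + 1)
    one_half_pos one_half_pos (add_halves 1)
  rw [Gamma_add_one hs.ne', mul_rpow hs.le (Gamma_pos_of_pos hs).le, mul_left_comm,
    ← rpow_add (Gamma_pos_of_pos hs), add_halves, rpow_one, ← sqrt_eq_rpow] at hconv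
  calc Gamma (s + 1 / 2) = Gamma (1 / 2 * s + 1 / 2 * (s + 1)) := by ring_nf
    _ ≤ √s * Gamma s := hconv

noncomputable def unitBallVolume (d : ℕ) : ℝ := √π ^ d / Gamma (d / 2 + 1)

theorem unitBallVolume_pos (d : ℕ) : 0 < unitBallVolume d :=
  div_pos (pow_pos (sqrt_pos.2 pi_pos) d) (Gamma_pos_of_pos (by positivity))

theorem sqrt_two_pi_div_mul_unitBallVolume_le (d : ℕ) :
    √(2 * π / (d + 2)) * unitBallVolume d ≤ unitBallVolume (d + 1) := by
  have hs : (0 : ℝ) < d / 2 + 1 := by positivity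
  have hΓ := Gamma_add_half_le_sqrt_mul_Gamma hs
  have hΓpos := Gamma_pos_of_pos hs
  have hΓ' : 0 < Gamma ((d + 1 : ℕ) / 2 + 1) := Gamma_pos_of_pos (by positivity)
  have hsplit : √(2 * π / (d + 2)) = √π / √(d / 2 + 1) := by
    rw [← sqrt_div' _ hs.le]; congr 1; field_simp
  rw [unitBallVolume, unitBallVolume, hsplit, div_mul_div_comm, ← pow_succ',
    div_le_div_iff_of_pos_left (by positivity) (by positivity) hΓ']
  calc Gamma ((d + 1 : ℕ) / 2 + 1) = Gamma (d / 2 + 1 + 1 / 2) := by push_cast; ring_nf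
    _ ≤ √(d / 2 + 1) * Gamma (d / 2 + 1) := hΓ

theorem integral_mul_sqrt_one_sub_sq_pow (d : ℕ) {γ : ℝ} (hγ₀ : -1 ≤ γ) (hγ₁ : γ ≤ 1) :
    ∫ t in γ..1, t * √(1 - t ^ 2) ^ d = √(1 - γ ^ 2) ^ (d + 2) / (d + 2) := by
  have hderiv : ∀ t ∈ Ioo γ 1,
      HasDerivAt (fun t => -(√(1 - t ^ 2) ^ (d + 2) / (d + 2))) (t * √(1 - t ^ 2) ^ d) t := by
    intro t ht
    have hpos : 0 < 1 - t ^ 2 := by nlinarith [ht.1, ht.2]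
    have hsqrt : √(1 - t ^ 2) ≠ 0 := (sqrt_pos.2 hpos).ne'
    have := ((((hasDerivAt_pow 2 t).const_sub 1).sqrt hpos.ne').fun_pow (d + 2)).div_const
      ((d : ℝ) + 2) |>.fun_neg
    refine this.congr_deriv ?_
    rw [show d + 2 - 1 = d + 1 by omega, pow_succ]
    push_cast
    field_simp
  rw [intervalIntegral.integral_eq_sub_of_hasDerivAt_of_le hγ₁ (by fun_prop) hderiv
    (by apply Continuous.intervalIntegrable; fun_prop)]
  simp

theorem div_add_one_sub_sq_div_le_sqrt_two_pi_div {n γ : ℝ} (hn : 1 ≤ n)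
    (hγl : 1 / √(2 * π * n) < γ) (hγu : γ < 1) :
    γ / n + (1 - γ ^ 2) / (γ * (n + 1)) ≤ √(2 * π / (n + 1)) := by
  set a := √(2 * π * n)
  have ha2 : a ^ 2 = 2 * π * n := sq_sqrt (by positivity)
  have ha0 : 0 < a := sqrt_pos.2 (by positivity)
  have hπ := pi_gt_three
  have hγ : 0 < γ := lt_trans (by positivity) hγl
  have haγ : 1 < a * γ := by rwa [div_lt_iff₀ ha0, mul_comm] at hγl
  -- `u ↦ u / n + 1 / u` decreases on `(0, √n]`, and `1 / a < γ < 1 ≤ √n`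
  have hdecr : γ / n + 1 / γ ≤ 1 / (a * n) + a := by
    have han : γ < a * n := by nlinarith
    have hdiff : 1 / (a * n) + a - (γ / n + 1 / γ) = (a * γ - 1) * (a * n - γ) / (a * n * γ) := by
      field_simp; ring
    have : 0 ≤ (a * γ - 1) * (a * n - γ) / (a * n * γ) := by
      apply div_nonneg (mul_nonneg _ _) (by positivity) <;> linarith
    linarith
  have hend : (1 / (a * n) + a) / (n + 1) ≤ √(2 * π / (n + 1)) := by
    rw [le_sqrt (by positivity) (by positivity), div_pow, div_le_div_iff₀ (by positivity)
      (by positivity)]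
    have hsq : (1 / (a * n) + a) ^ 2 = 1 / (2 * π * n ^ 3) + 2 / n + 2 * π * n := by
      field_simp; rw [ha2]; ring
    have h1 : 1 / (2 * π * n ^ 3) ≤ 1 := by
      rw [div_le_one (by positivity)]; nlinarith [one_le_pow₀ (n := 3) hn]
    have h2 : 2 / n ≤ 2 := by rw [div_le_iff₀ (by positivity)]; linarith
    rw [hsq]; nlinarith
  calc γ / n + (1 - γ ^ 2) / (γ * (n + 1)) = (γ / n + 1 / γ) / (n + 1) := by
        field_simp; ring
    _ ≤ (1 / (a * n) + a) / (n + 1) := by gcongr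
    _ ≤ √(2 * π / (n + 1)) := hend

-- `t` and `y` are the components, along and across an axis, of a point of norm `N`.
theorem mem_cone_slice_or_cap_slice {t y N γ : ℝ} (hN : N ^ 2 = t ^ 2 + y ^ 2) (hy : 0 ≤ y)
    (hN₀ : 0 < N) (hN₁ : N < 1) (hcone : γ * N ≤ t) (hγ₀ : 0 < γ) (hγ₁ : γ < 1) :
    (t ∈ Icc 0 γ ∧ y ≤ √(1 - γ ^ 2) / γ * t) ∨ (t ∈ Icc γ 1 ∧ y ≤ √(1 - t ^ 2)) := by
  have ht₀ : 0 < t := (mul_pos hγ₀ hN₀).trans_le hcone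
  have htN : t ≤ N := by nlinarith
  by_cases htγ : t ≤ γ
  · refine Or.inl ⟨⟨ht₀.le, htγ⟩, ?_⟩
    rw [← pow_le_pow_iff_left₀ hy (by positivity) two_ne_zero, mul_pow, div_pow,
      sq_sqrt (by nlinarith), div_mul_eq_mul_div, le_div_iff₀ (by positivity)]
    nlinarith [mul_le_mul hcone hcone (by positivity) ht₀.le]
  · exact Or.inr ⟨⟨(not_le.1 htγ).le, htN.trans hN₁.le⟩, le_sqrt_of_sq_le (by nlinarith)⟩

theorem measurableSet_setOf_fst_mem_norm_snd_le {F : Type*} [NormedAddCommGroup F]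
    [MeasurableSpace F] [OpensMeasurableSpace F] {I : Set ℝ} (hI : MeasurableSet I)
    {g : ℝ → ℝ} (hg : Measurable g) :
    MeasurableSet {p : ℝ × F | p.1 ∈ I ∧ ‖p.2‖ ≤ g p.1} :=
  (measurable_fst hI).inter (measurableSet_le (by fun_prop) (hg.comp measurable_fst))

section SolidOfRevolution

variable {F : Type*} [NormedAddCommGroup F] [InnerProductSpace ℝ F] [FiniteDimensional ℝ F]
  [MeasurableSpace F] [BorelSpace F] [Nontrivial F]

theorem volume_setOf_fst_mem_norm_snd_le {I : Set ℝ} (hI : MeasurableSet I) {g : ℝ → ℝ}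
    (hg : Measurable g) :
    volume {p : ℝ × F | p.1 ∈ I ∧ ‖p.2‖ ≤ g p.1} =
      ∫⁻ t in I, .ofReal (g t) ^ finrank ℝ F * .ofReal (unitBallVolume (finrank ℝ F)) := by
  have hslice : ∀ t, volume (Prod.mk t ⁻¹' {p : ℝ × F | p.1 ∈ I ∧ ‖p.2‖ ≤ g p.1}) =
      I.indicator (fun t => volume (closedBall (0 : F) (g t))) t := by
    intro t
    by_cases ht : t ∈ I
    · simp [ht, closedBall]
    · simp [ht]
  simp_rw [Measure.volume_eq_prod,
    Measure.prod_apply (measurableSet_setOf_fst_mem_norm_snd_le hI hg), hslice, lintegral_indicator hI, InnerProductSpace.volume_closedBall, unitBallVolume]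

theorem volume_cone_eq {σ h : ℝ} (hσ : 0 ≤ σ) (hh : 0 ≤ h) :
    volume {p : ℝ × F | p.1 ∈ Icc 0 h ∧ ‖p.2‖ ≤ σ * p.1} =
      .ofReal (unitBallVolume (finrank ℝ F) * σ ^ finrank ℝ F * h ^ (finrank ℝ F + 1) /
        (finrank ℝ F + 1)) := by
  rw [volume_setOf_fst_mem_norm_snd_le measurableSet_Icc (by fun_prop)]
  set d := finrank ℝ F
  have hω := (unitBallVolume_pos d).le
  have hintegrand : ∀ t ∈ Icc 0 h, ENNReal.ofReal (σ * t) ^ d * .ofReal (unitBallVolume d) =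
      .ofReal (unitBallVolume d * σ ^ d * t ^ d) := fun t ht => by
    have := ht.1
    rw [← ENNReal.ofReal_pow (by positivity), ← ENNReal.ofReal_mul (by positivity), mul_pow,
      mul_comm, mul_assoc]
  rw [setLIntegral_congr_fun measurableSet_Icc hintegrand,
    ← ofReal_integral_eq_lintegral_ofReal (Continuous.integrableOn_Icc (by fun_prop))
      ((ae_restrict_mem measurableSet_Icc).mono fun t ht => by have := ht.1; positivity),
    integral_Icc_eq_integral_Ioc, ← intervalIntegral.integral_of_le hh,
    intervalIntegral.integral_const_mul, integral_pow]
  congr 1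
  rw [zero_pow d.succ_ne_zero, sub_zero]
  ring

theorem volume_ballCap_le {γ : ℝ} (hγ₀ : 0 < γ) (hγ₁ : γ ≤ 1) :
    volume {p : ℝ × F | p.1 ∈ Icc γ 1 ∧ ‖p.2‖ ≤ √(1 - p.1 ^ 2)} ≤
      .ofReal (unitBallVolume (finrank ℝ F) * √(1 - γ ^ 2) ^ (finrank ℝ F + 2) /
        (γ * (finrank ℝ F + 2))) := by
  rw [volume_setOf_fst_mem_norm_snd_le measurableSet_Icc (g := fun t => √(1 - t ^ 2))
    (by fun_prop)]
  set d := finrank ℝ F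
  have hω := (unitBallVolume_pos d).le
  calc ∫⁻ t in Icc γ 1, .ofReal √(1 - t ^ 2) ^ d * .ofReal (unitBallVolume d)
      ≤ ∫⁻ t in Icc γ 1, .ofReal (unitBallVolume d / γ * (t * √(1 - t ^ 2) ^ d)) := by
        refine setLIntegral_mono (by fun_prop) fun t ht => ?_
        rw [← ENNReal.ofReal_pow (sqrt_nonneg _), ← ENNReal.ofReal_mul (by positivity)]
        refine ENNReal.ofReal_le_ofReal ?_
        have : 1 ≤ t / γ := (one_le_div hγ₀).2 ht.1
        calc √(1 - t ^ 2) ^ d * unitBallVolume d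
            ≤ t / γ * (√(1 - t ^ 2) ^ d * unitBallVolume d) :=
              le_mul_of_one_le_left (by positivity) this
          _ = _ := by ring
    _ = .ofReal (unitBallVolume d / γ * ∫ t in γ..1, t * √(1 - t ^ 2) ^ d) := by
        rw [intervalIntegral.integral_of_le hγ₁, ← integral_Icc_eq_integral_Ioc,
          ← integral_const_mul, ofReal_integral_eq_lintegral_ofReal
            (Continuous.integrableOn_Icc (by fun_prop))
            ((ae_restrict_mem measurableSet_Icc).mono fun t ht => by
              have := hγ₀.trans_le ht.1; positivity)]
    _ = _ := by
        rw [integral_mul_sqrt_one_sub_sq_pow d (by linarith) hγ₁]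
        congr 1
        field_simp

end SolidOfRevolution

section InnerProductSpace

variable {E : Type*} [NormedAddCommGroup E] [InnerProductSpace ℝ E]

theorem exists_orthonormalBasis_apply_zero [FiniteDimensional ℝ E] {d : ℕ}
    (hE : finrank ℝ E = d + 1) {r : E} (hr : ‖r‖ = 1) :
    ∃ b : OrthonormalBasis (Fin (d + 1)) ℝ E, b 0 = r := by
  have hv : Orthonormal ℝ (({0} : Set (Fin (d + 1))).domRestrict fun _ => r) :=
    ⟨fun _ => hr, fun i j hij => absurd (Subsingleton.elim i j) hij⟩
  obtain ⟨b, hb⟩ := hv.exists_orthonormalBasis_extension_of_card_eq (by simpa using hE)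
  exact ⟨b, hb 0 rfl⟩

variable [MeasurableSpace E] [BorelSpace E]

theorem exists_measurePreserving_inner_fst [FiniteDimensional ℝ E] {d : ℕ}
    (hE : finrank ℝ E = d + 1) {r : E} (hr : ‖r‖ = 1) :
    ∃ e : E → ℝ × EuclideanSpace ℝ (Fin d), MeasurePreserving e ∧
      ∀ x, (e x).1 = ⟪r, x⟫ ∧ ‖x‖ ^ 2 = ⟪r, x⟫ ^ 2 + ‖(e x).2‖ ^ 2 := by
  obtain ⟨b, rfl⟩ := exists_orthonormalBasis_apply_zero hE hr
  refine ⟨fun x => (b.repr x 0, WithLp.toLp 2 fun j => b.repr x j.succ), ?_, fun x => ⟨?_, ?_⟩⟩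
  · exact (MeasurePreserving.id volume |>.prod (PiLp.volume_preserving_toLp _)).comp
      ((volume_preserving_piFinSuccAbove (fun _ => ℝ) 0).comp
        ((PiLp.volume_preserving_ofLp _).comp b.measurePreserving_repr))
  · exact b.repr_apply_apply x 0
  · rw [← b.repr_apply_apply, ← b.repr.norm_map, EuclideanSpace.real_norm_sq_eq,
      EuclideanSpace.real_norm_sq_eq, Fin.sum_univ_succ]

theorem MeasureTheory.Measure.toSphere_setOf_le_inner (μ : Measure E) (r : E) (γ : ℝ) :
    μ.toSphere {z | γ ≤ ⟪r, (z : E)⟫} =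
      finrank ℝ E * μ {x | ‖x‖ ∈ Ioo 0 1 ∧ γ * ‖x‖ ≤ ⟪r, x⟫} := by
  have hcap : MeasurableSet {z : sphere (0 : E) 1 | γ ≤ ⟪r, (z : E)⟫} :=
    measurableSet_le measurable_const (by fun_prop)
  rw [μ.toSphere_apply' hcap]
  congr 2
  ext x
  simp only [Set.mem_smul, mem_image, mem_ofPred_eq]
  constructor
  · rintro ⟨c, hc, _, ⟨z, hz, rfl⟩, rfl⟩
    have hz1 : ‖(z : E)‖ = 1 := norm_eq_of_mem_sphere z
    rw [norm_smul, hz1, Real.norm_of_nonneg hc.1.le, mul_one, real_inner_smul_right]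
    exact ⟨hc, by nlinarith [hc.1]⟩
  · rintro ⟨hx, hγx⟩
    have hx0 : ‖x‖ ≠ 0 := hx.1.ne'
    refine ⟨‖x‖, hx, ‖x‖⁻¹ • x, ⟨⟨‖x‖⁻¹ • x, ?_⟩, ?_, rfl⟩, smul_inv_smul₀ hx0 x⟩
    · rw [mem_sphere_zero_iff_norm, norm_smul, norm_inv, norm_norm, inv_mul_cancel₀ hx0]
    · rw [real_inner_smul_right, le_inv_mul_iff₀ hx.1, mul_comm]
      exact hγx

theorem volume_cone_inter_ball_le [FiniteDimensional ℝ E] {d : ℕ} [NeZero d]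
    (hE : finrank ℝ E = d + 1) {r : E} (hr : ‖r‖ = 1) {γ : ℝ} (hγ₀ : 0 < γ) (hγ₁ : γ < 1) :
    volume {x : E | ‖x‖ ∈ Ioo 0 1 ∧ γ * ‖x‖ ≤ ⟪r, x⟫} ≤ .ofReal (unitBallVolume d *
      √(1 - γ ^ 2) ^ d * (γ / (d + 1) + (1 - γ ^ 2) / (γ * (d + 2)))) := by
  obtain ⟨e, he, hex⟩ := exists_measurePreserving_inner_fst hE hr
  set s := √(1 - γ ^ 2)
  have hs2 : s ^ 2 = 1 - γ ^ 2 := sq_sqrt (by nlinarith)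
  let cone := {p : ℝ × EuclideanSpace ℝ (Fin d) | p.1 ∈ Icc 0 γ ∧ ‖p.2‖ ≤ s / γ * p.1}
  let cap := {p : ℝ × EuclideanSpace ℝ (Fin d) | p.1 ∈ Icc γ 1 ∧ ‖p.2‖ ≤ √(1 - p.1 ^ 2)}
  have hsub : {x : E | ‖x‖ ∈ Ioo 0 1 ∧ γ * ‖x‖ ≤ ⟪r, x⟫} ⊆ e ⁻¹' (cone ∪ cap) := by
    rintro x ⟨hx, hγx⟩
    obtain ⟨hfst, hnorm⟩ := hex x
    rw [← hfst] at hnorm hγx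
    exact mem_cone_slice_or_cap_slice hnorm (norm_nonneg _) hx.1 hx.2 hγx hγ₀ hγ₁
  have hmeas : MeasurableSet (cone ∪ cap) :=
    (measurableSet_setOf_fst_mem_norm_snd_le measurableSet_Icc (g := (s / γ * ·))
      (by fun_prop)).union (measurableSet_setOf_fst_mem_norm_snd_le measurableSet_Icc
        (g := fun t => √(1 - t ^ 2)) (by fun_prop))
  have hcone := volume_cone_eq (F := EuclideanSpace ℝ (Fin d)) (σ := s / γ) (by positivity) hγ₀.le
  have hcap := volume_ballCap_le (F := EuclideanSpace ℝ (Fin d)) hγ₀ hγ₁.le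
  rw [finrank_euclideanSpace_fin] at hcone hcap
  have hω := (unitBallVolume_pos d).le
  calc _ ≤ volume (e ⁻¹' (cone ∪ cap)) := measure_mono hsub
    _ = volume (cone ∪ cap) := he.measure_preimage hmeas.nullMeasurableSet
    _ ≤ volume cone + volume cap := measure_union_le _ _
    _ ≤ _ := add_le_add hcone.le hcap
    _ = _ := by
      rw [← ENNReal.ofReal_add (by positivity) (by positivity)]
      congr 1
      rw [div_pow, pow_succ γ d, pow_add s d 2, hs2]
      field_simp

theorem inv_toSphere_univ_mul_toSphere_setOf_le_inner_le [FiniteDimensional ℝ E] {d : ℕ} [NeZero d]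
    (hE : finrank ℝ E = d + 1) {r : E} (hr : ‖r‖ = 1) {γ : ℝ}
    (hγl : 1 / √(2 * π * (d + 1)) < γ) (hγu : γ < 1) :
    (volume.toSphere (univ : Set (sphere (0 : E) 1)))⁻¹ *
        volume.toSphere {z : sphere (0 : E) 1 | γ ≤ ⟪r, (z : E)⟫} ≤
      .ofReal (√(1 - γ ^ 2) ^ d) := by
  have : Nontrivial E := nontrivial_of_finrank_eq_succ hE
  have hγ₀ : 0 < γ := lt_trans (by positivity) hγl
  have hball : volume (ball (0 : E) 1) = .ofReal (unitBallVolume (d + 1)) := by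
    rw [InnerProductSpace.volume_ball, hE, ENNReal.ofReal_one, one_pow, one_mul, unitBallVolume,
      Nat.cast_succ]
  have hratio := div_add_one_sub_sq_div_le_sqrt_two_pi_div (n := d + 1) (by simp) hγl hγu
  rw [show (d : ℝ) + 1 + 1 = d + 2 by ring] at hratio
  have hcone : volume {x : E | ‖x‖ ∈ Ioo 0 1 ∧ γ * ‖x‖ ≤ ⟪r, x⟫} ≤
      .ofReal (√(1 - γ ^ 2) ^ d) * volume (ball (0 : E) 1) := by
    have hω := unitBallVolume_pos d
    calc _ ≤ _ := volume_cone_inter_ball_le hE hr hγ₀ hγu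
      _ ≤ .ofReal (√(1 - γ ^ 2) ^ d * (√(2 * π / (d + 2)) * unitBallVolume d)) := by
        refine ENNReal.ofReal_le_ofReal ?_
        rw [mul_comm (unitBallVolume d), mul_comm (√(2 * π / (d + 2))), ← mul_assoc]
        gcongr
      _ ≤ .ofReal (√(1 - γ ^ 2) ^ d * unitBallVolume (d + 1)) := by
        gcongr
        exact sqrt_two_pi_div_mul_unitBallVolume_le d
      _ = _ := by rw [hball, ENNReal.ofReal_mul (by positivity)]
  rw [Measure.toSphere_apply_univ, Measure.toSphere_setOf_le_inner,
    ENNReal.inv_mul_le_iff (by simp [hE, (measure_ball_pos volume (0 : E) one_pos).ne'])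
      (ENNReal.mul_ne_top (by simp) measure_ball_lt_top.ne), mul_assoc,
    mul_comm (volume _)]
  gcongr

end InnerProductSpace

theorem stmt7_general (n : ℕ)
    (r : EuclideanSpace ℝ (Fin n)) (hr : ‖r‖ = 1) (γ : ℝ)
    (hγl : 1 / Real.sqrt (2 * Real.pi * n) < γ) (hγu : γ < 1) :
    (((volume : Measure (EuclideanSpace ℝ (Fin n))).toSphere Set.univ)⁻¹ •
        (volume : Measure (EuclideanSpace ℝ (Fin n))).toSphere)
      {z : Metric.sphere (0 : EuclideanSpace ℝ (Fin n)) 1 |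
        γ ≤ ⟪r, (z : EuclideanSpace ℝ (Fin n))⟫} ≤
      ENNReal.ofReal ((1 - γ ^ 2) ^ (((n : ℝ) - 1) / 2)) := by
  rw [Measure.smul_apply, smul_eq_mul]
  have hγ₀ : 0 < γ := lt_of_le_of_lt (by positivity) hγl
  obtain hn | ⟨d, rfl⟩ : n ≤ 1 ∨ ∃ d, n = d + 2 := by
    rcases Nat.lt_or_ge n 2 with h | h
    exacts [Or.inl (by omega), Or.inr ⟨n - 2, by omega⟩]
  · calc _ ≤ (volume.toSphere univ)⁻¹ * volume.toSphere univ := by gcongr; exact subset_univ _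
      _ ≤ 1 := ENNReal.inv_mul_le_one _
      _ ≤ _ := ENNReal.one_le_ofReal.2 <| one_le_rpow_of_pos_of_le_one_of_nonpos (by nlinarith)
          (by nlinarith) (by have : (n : ℝ) ≤ 1 := (by exact_mod_cast hn); linarith)
  · have hexp : (1 - γ ^ 2) ^ ((((d + 2 : ℕ) : ℝ) - 1) / 2) = √(1 - γ ^ 2) ^ (d + 1) := by
      rw [sqrt_eq_rpow, ← rpow_natCast ((1 - γ ^ 2) ^ (1 / 2 : ℝ)), ← rpow_mul (by nlinarith)]
      push_cast
      ring_nf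
    rw [hexp]
    exact inv_toSphere_univ_mul_toSphere_setOf_le_inner_le finrank_euclideanSpace_fin hr
      (by push_cast at hγl ⊢; convert hγl using 4; ring) hγu

theorem stmt7 (n : ℕ) (hn : 1 ≤ n)
    (r : EuclideanSpace ℝ (Fin n)) (hr : ‖r‖ = 1) (γ : ℝ)
    (hγl : 1 / Real.sqrt (2 * Real.pi * n) < γ) (hγu : γ < 1) :
    (((volume : Measure (EuclideanSpace ℝ (Fin n))).toSphere Set.univ)⁻¹ •
        (volume : Measure (EuclideanSpace ℝ (Fin n))).toSphere)
      {z : Metric.sphere (0 : EuclideanSpace ℝ (Fin n)) 1 |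
        γ ≤ ⟪r, (z : EuclideanSpace ℝ (Fin n))⟫} ≤
      ENNReal.ofReal ((1 - γ ^ 2) ^ (((n : ℝ) - 1) / 2)) :=
  stmt7_general n r hr γ hγl hγu
end
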